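/- Assume x ≥ 0 and z ≥ 0. Then W(t,x,y,z) = z + ⨅ over all controls u of ∫_t^T [ P(s)·(ū − u(s)) + dist(Y^{t,y,u}(s), K) ] ds. -/

import Mathlib

open MeasureTheory

noncomputable section

/-- A control: measurable, valued in `[0, ubar]` a.e. on `[t, T]`. -/
def IsControl (t T ubar : ℝ) (u : ℝ → ℝ) : Prop :=
  Measurable u ∧ ∀ᵐ s ∂(volume : Measure ℝ), s ∈ Set.Icc t T → u s ∈ Set.Icc 0 ubar

/-- Reservoir level `Y^{t,y,u}(s) = y + ∫_t^s (β(r) − u(r)) dr`. -/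
def traj (t : ℝ) (β : ℝ → ℝ) (y : ℝ) (u : ℝ → ℝ) (s : ℝ) : ℝ :=
  y + ∫ r in t..s, (β r - u r)

/-- A control admissible for `(t, y)`: the trajectory stays in `K = [0, ybar]` on `[t, T]`. -/
def Admissible (t T ubar ybar : ℝ) (β : ℝ → ℝ) (y : ℝ) (u : ℝ → ℝ) : Prop :=
  IsControl t T ubar u ∧ ∀ s ∈ Set.Icc t T, traj t β y u s ∈ Set.Icc 0 ybar

/-- Deterministic price `P(s) = x e^{b(s−t)}`. -/
def price (t x b s : ℝ) : ℝ := x * Real.exp (b * (s - t))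

/-- Cost functional of the level-set (auxiliary) problem. -/
def levelCost (t T ubar ybar x b : ℝ) (β : ℝ → ℝ) (y z : ℝ) (u : ℝ → ℝ) : ℝ :=
  max (z - ∫ s in t..T, price t x b s * (u s - ubar)) 0
    + ∫ s in t..T, Metric.infDist (traj t β y u s) (Set.Icc 0 ybar)

/-- The level-set function `W`. -/
def W (t T ubar ybar x b : ℝ) (β : ℝ → ℝ) (y z : ℝ) : ℝ :=
  sInf {c : ℝ | ∃ u, IsControl t T ubar u ∧ c = levelCost t T ubar ybar x b β y z u}

/-- `G(t,x) = ū ∫_t^T P(s) ds`. -/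
def G (t T ubar x b : ℝ) : ℝ := ubar * ∫ s in t..T, price t x b s

/-! For `z ≥ 0` the positive part in the level-set cost is never active: the revenue deficit
`∫ P (ū - u)` is nonnegative because `P ≥ 0` and `u ≤ ū`. Hence the level-set cost of every
control is `z` plus the running cost, and translating by `z` commutes with the infimum. -/

open Set intervalIntegral

lemma sInf_setOf_eq_add {α : Type*} {p : α → Prop} {f g : α → ℝ} (z : ℝ)
    (hg : ∀ a, p a → g a = z + f a) (hne : ∃ a, p a) (hbdd : ∃ m, ∀ a, p a → m ≤ f a) :
    sInf {c | ∃ a, p a ∧ c = g a} = z + sInf {c | ∃ a, p a ∧ c = f a} := by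
  set S := {c | ∃ a, p a ∧ c = f a}
  have hS : S.Nonempty := let ⟨a, ha⟩ := hne; ⟨f a, a, ha, rfl⟩
  have hSbdd : BddBelow S := let ⟨m, hm⟩ := hbdd; ⟨m, by rintro _ ⟨a, ha, rfl⟩; exact hm a ha⟩
  have himage : {c | ∃ a, p a ∧ c = g a} = OrderIso.addLeft z '' S := by
    ext c
    constructor
    · rintro ⟨a, ha, rfl⟩
      exact ⟨f a, ⟨a, ha, rfl⟩, (hg a ha).symm⟩
    · rintro ⟨_, ⟨a, ha, rfl⟩, rfl⟩
      exact ⟨a, ha, (hg a ha).symm⟩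
  rw [himage, ← OrderIso.map_csInf' _ hS hSbdd]
  rfl

section Control

variable {t T ubar : ℝ} {u : ℝ → ℝ}

lemma IsControl.ae_mem_Icc (hu : IsControl t T ubar u) :
    ∀ᵐ s ∂volume.restrict (Icc t T), u s ∈ Icc 0 ubar :=
  (ae_restrict_iff' measurableSet_Icc).2 hu.2

lemma IsControl.intervalIntegrable (htT : t ≤ T) (hu : IsControl t T ubar u) :
    IntervalIntegrable u volume t T := by
  rw [intervalIntegrable_iff_integrableOn_Icc_of_le htT]
  refine Measure.integrableOn_of_bounded (M := ubar) measure_Icc_lt_top.ne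
    hu.1.aestronglyMeasurable ?_
  filter_upwards [hu.ae_mem_Icc] with s hs
  rw [Real.norm_of_nonneg hs.1]
  exact hs.2

end Control

lemma continuousOn_traj {t T y : ℝ} {β u : ℝ → ℝ} (hβ : IntervalIntegrable β volume t T)
    (hu : IntervalIntegrable u volume t T) : ContinuousOn (traj t β y u) (uIcc t T) :=
  continuousOn_const.add (continuousOn_primitive_interval' (hβ.sub hu) left_mem_uIcc)

lemma intervalIntegrable_infDist_traj {t T y : ℝ} {β u : ℝ → ℝ} (K : Set ℝ)
    (hβ : IntervalIntegrable β volume t T) (hu : IntervalIntegrable u volume t T) :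
    IntervalIntegrable (fun s => Metric.infDist (traj t β y u s) K) volume t T :=
  ((Metric.continuous_infDist_pt K).comp_continuousOn (continuousOn_traj hβ hu)).intervalIntegrable

lemma continuous_price (t x b : ℝ) : Continuous (price t x b) := by
  unfold price
  fun_prop

lemma price_nonneg {x : ℝ} (t b s : ℝ) (hx : 0 ≤ x) : 0 ≤ price t x b s :=
  mul_nonneg hx (Real.exp_pos _).le

section Revenue

variable {t T ubar x b : ℝ} {u : ℝ → ℝ}

lemma IsControl.intervalIntegrable_price_mul_sub (htT : t ≤ T) (hu : IsControl t T ubar u) :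
    IntervalIntegrable (fun s => price t x b s * (ubar - u s)) volume t T :=
  (intervalIntegrable_const.sub (hu.intervalIntegrable htT)).continuousOn_mul
    (continuous_price t x b).continuousOn

lemma IsControl.ae_price_mul_sub_nonneg (hx : 0 ≤ x) (hu : IsControl t T ubar u) :
    ∀ᵐ s ∂volume.restrict (Icc t T), 0 ≤ price t x b s * (ubar - u s) := by
  filter_upwards [hu.ae_mem_Icc] with s hs
  exact mul_nonneg (price_nonneg t b s hx) (sub_nonneg.2 hs.2)

end Revenue

section LevelCost

variable {t T ubar ybar x b y z : ℝ} {β u : ℝ → ℝ}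

lemma IsControl.integral_price_mul_sub_add_infDist_nonneg (htT : t ≤ T) (hx : 0 ≤ x)
    (hu : IsControl t T ubar u) :
    0 ≤ ∫ s in t..T, (price t x b s * (ubar - u s)
      + Metric.infDist (traj t β y u s) (Icc 0 ybar)) := by
  refine integral_nonneg_of_ae_restrict htT ?_
  filter_upwards [hu.ae_price_mul_sub_nonneg hx] with s hs
  exact add_nonneg hs Metric.infDist_nonneg

lemma IsControl.levelCost_eq (htT : t ≤ T) (hβ : IntervalIntegrable β volume t T)
    (hx : 0 ≤ x) (hz : 0 ≤ z) (hu : IsControl t T ubar u) :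
    levelCost t T ubar ybar x b β y z u
      = z + ∫ s in t..T, (price t x b s * (ubar - u s)
          + Metric.infDist (traj t β y u s) (Icc 0 ybar)) := by
  have hrevenue : 0 ≤ ∫ s in t..T, price t x b s * (ubar - u s) :=
    integral_nonneg_of_ae_restrict htT (hu.ae_price_mul_sub_nonneg hx)
  have hneg : ∫ s in t..T, price t x b s * (u s - ubar)
      = -∫ s in t..T, price t x b s * (ubar - u s) := by
    rw [← intervalIntegral.integral_neg]
    congr 1 with s
    ring
  rw [levelCost, hneg, sub_neg_eq_add, max_eq_left (by linarith),
    integral_add (hu.intervalIntegrable_price_mul_sub htT)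
      (intervalIntegrable_infDist_traj _ hβ (hu.intervalIntegrable htT)),
    add_assoc]

end LevelCost

theorem stmt3_general (t T ubar ybar b x y z : ℝ) (β : ℝ → ℝ)
    (htT : t ≤ T) (hub : 0 < ubar)
    (hβm : Measurable β) (hβb : ∃ M, ∀ s, |β s| ≤ M)
    (hx : 0 ≤ x) (hz : 0 ≤ z) :
    W t T ubar ybar x b β y z
      = z + sInf {c : ℝ | ∃ u, IsControl t T ubar u ∧
          c = ∫ s in t..T,
              (price t x b s * (ubar - u s)
                + Metric.infDist (traj t β y u s) (Set.Icc 0 ybar))} := by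
  obtain ⟨M, hM⟩ := hβb
  have hβ : IntervalIntegrable β volume t T := by
    rw [intervalIntegrable_iff_integrableOn_Icc_of_le htT]
    exact Measure.integrableOn_of_bounded measure_Icc_lt_top.ne hβm.aestronglyMeasurable
      (ae_of_all _ hM)
  have hconst : IsControl t T ubar fun _ => ubar :=
    ⟨measurable_const, ae_of_all _ fun _ _ => ⟨hub.le, le_rfl⟩⟩
  exact sInf_setOf_eq_add z (fun u hu => hu.levelCost_eq htT hβ hx hz) ⟨_, hconst⟩
    ⟨0, fun u hu => hu.integral_price_mul_sub_add_infDist_nonneg htT hx⟩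

/-- Proposition 5.3, last claim (deterministic-price instance): for `z ≥ 0`,
`W(t,x,y,z) = z + inf over controls of ∫_t^T [P(s)(ū − u(s)) + dist(Y(s), K)] ds`. -/
theorem stmt3 (t T ubar ybar b x y z : ℝ) (β : ℝ → ℝ)
    (ht : 0 ≤ t) (htT : t ≤ T) (hub : 0 < ubar) (hyb : 0 < ybar)
    (hβm : Measurable β) (hβb : ∃ M, ∀ s, |β s| ≤ M)
    (hx : 0 ≤ x) (hz : 0 ≤ z) :
    W t T ubar ybar x b β y z
      = z + sInf {c : ℝ | ∃ u, IsControl t T ubar u ∧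
          c = ∫ s in t..T,
              (price t x b s * (ubar - u s)
                + Metric.infDist (traj t β y u s) (Set.Icc 0 ybar))} :=
  stmt3_general t T ubar ybar b x y z β htT hub hβm hβb hx hz
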